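/- arXiv:1706.09681 — 3 statements merged into one kernel-verified Lean document; each statement's English description precedes it below -/
import Mathlib

section
/- (Theorem 2.1) For λ ∈ ℝ, r a nonnegative integer, and nonnegative integers n, k with n ≥ k, the extended degenerate Stirling numbers of the second kind satisfy S_{2,r}(n+r, k+r | λ) = Σ_{l=k}^{n} Σ_{m=0}^{n−l} C(n,l) r^m λ^{n−m−l} S_1(n−l, m) S_{2,λ}(l, k). -/
/-! The exponential generating function of `S_{2,r}(n+r,k+r|λ)` is the product of those of
`(r|λ)_n` and of `S_{2,λ}(n,k)`, so these numbers are the binomial convolution of the other two.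
It remains to expand `(r|λ)_j = Σ_m S_1(j,m) r^m λ^(j-m)`: the polynomial `∏_{i<j} (x - iλ)`
is the homogenization of `(x)_j = Σ_m S_1(j,m) x^m` evaluated at `(r, λ)`. -/

open Finset

/-- The degenerate falling factorial `(x|λ)_n = x(x-λ)(x-2λ)⋯(x-(n-1)λ)`. -/
noncomputable def degFall (x lam : ℝ) (n : ℕ) : ℝ := ∏ i ∈ Finset.range n, (x - i * lam)

/-- The formal power series `(1+λt)^{y/λ} = Σ_{m=0}^∞ (y|λ)_m t^m/m!`. -/
noncomputable def degExp (lam y : ℝ) : PowerSeries ℝ :=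
  PowerSeries.mk fun m => degFall y lam m / m.factorial

/-- The degenerate Stirling numbers of the second kind `S_{2,λ}(n,k)`, defined by
`(1/k!)((1+λt)^{1/λ} - 1)^k = Σ_{n=k}^∞ S_{2,λ}(n,k) t^n/n!`. -/
noncomputable def degStirling2 (lam : ℝ) (n k : ℕ) : ℝ :=
  (n.factorial : ℝ) *
    PowerSeries.coeff n (((k.factorial : ℝ))⁻¹ • (degExp lam 1 - 1) ^ k)

/-- The extended degenerate Stirling numbers of the second kind `S_{2,r}(n+r,k+r|λ)`,
defined by `(1/k!)(1+λt)^{r/λ}((1+λt)^{1/λ} - 1)^k = Σ_{n=k}^∞ S_{2,r}(n+r,k+r|λ) t^n/n!`. -/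
noncomputable def extDegStirling2 (lam : ℝ) (r n k : ℕ) : ℝ :=
  (n.factorial : ℝ) *
    PowerSeries.coeff n
      (((k.factorial : ℝ))⁻¹ • (degExp lam r * (degExp lam 1 - 1) ^ k))

/-- The exponential `e^f = Σ_{k=0}^∞ f^k / k!` of a formal power series, computed
coefficientwise (the coefficientwise sums converge when `f` has zero constant term). -/
noncomputable def expComp (f : PowerSeries ℝ) : PowerSeries ℝ :=
  PowerSeries.mk fun n => ∑' k : ℕ, PowerSeries.coeff n (f ^ k) / k.factorial

/-- The degenerate Bell polynomials, defined by
`e^{x((1+λt)^{1/λ} - 1)} = Σ_{n=0}^∞ Bel_{n,λ}(x) t^n/n!`. -/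
noncomputable def degBell (lam x : ℝ) (n : ℕ) : ℝ :=
  (n.factorial : ℝ) * PowerSeries.coeff n (expComp (x • (degExp lam 1 - 1)))

/-- The extended degenerate Bell polynomials, defined by
`(1+λt)^{r/λ} e^{x((1+λt)^{1/λ} - 1)} = Σ_{n=0}^∞ Bel^{(r)}_{n,λ}(x) t^n/n!`. -/
noncomputable def extDegBell (lam : ℝ) (r : ℕ) (x : ℝ) (n : ℕ) : ℝ :=
  (n.factorial : ℝ) *
    PowerSeries.coeff n (degExp lam r * expComp (x • (degExp lam 1 - 1)))

/-- The signed Stirling numbers of the first kind `S_1(n,k)`, defined by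
`(x)_n = x(x-1)⋯(x-n+1) = Σ_{k=0}^n S_1(n,k) x^k`. -/
noncomputable def stirling1 (n k : ℕ) : ℝ :=
  (∏ i ∈ Finset.range n, (Polynomial.X - Polynomial.C (i : ℝ))).coeff k

/-- The Stirling numbers of the second kind, defined by
`(1/k!)(e^t - 1)^k = Σ_{n=k}^∞ S_2(n,k) t^n/n!`. -/
noncomputable def stirling2 (n k : ℕ) : ℝ :=
  (n.factorial : ℝ) *
    PowerSeries.coeff n (((k.factorial : ℝ))⁻¹ • (PowerSeries.exp ℝ - 1) ^ k)

/-- The r-Stirling numbers of the second kind `S_{2,r}(n+r,k+r)`, defined by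
`e^{rt}(1/k!)(e^t - 1)^k = Σ_{n=0}^∞ S_{2,r}(n+r,k+r) t^n/n!`. -/
noncomputable def rStirling2 (r n k : ℕ) : ℝ :=
  (n.factorial : ℝ) *
    PowerSeries.coeff n
      (PowerSeries.rescale (r : ℝ) (PowerSeries.exp ℝ) *
        ((k.factorial : ℝ))⁻¹ • (PowerSeries.exp ℝ - 1) ^ k)

/-- The ordinary falling factorial `(x)_k = x(x-1)⋯(x-k+1)`. -/
noncomputable def fallFact (x : ℝ) (k : ℕ) : ℝ := ∏ i ∈ Finset.range k, (x - i)

theorem Polynomial.eval_homogenize_eq_sum {R : Type*} [CommSemiring R] (p : Polynomial R) (n : ℕ)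
    (x : Fin 2 → R) :
    MvPolynomial.eval x (p.homogenize n) =
      ∑ kl ∈ antidiagonal n, p.coeff kl.1 * x 0 ^ kl.1 * x 1 ^ kl.2 := by
  simp [Polynomial.homogenize, MvPolynomial.eval_monomial, Finsupp.prod_fintype, mul_assoc]

theorem degFall_eq_sum_stirling1 (x lam : ℝ) (n : ℕ) :
    degFall x lam n = ∑ m ∈ range (n + 1), stirling1 n m * x ^ m * lam ^ (n - m) := by
  have hfactor (c : ℝ) :
      MvPolynomial.eval ![x, lam] ((Polynomial.X - Polynomial.C c).homogenize 1) = x - c * lam := by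
    simp
  have hprod := Polynomial.homogenize_finsetProd (s := range n) (n := fun _ => 1)
    (p := fun i => Polynomial.X - Polynomial.C (i : ℝ))
    fun i _ => (Polynomial.natDegree_X_sub_C _).le
  have := congrArg (MvPolynomial.eval ![x, lam]) hprod
  simp only [sum_const, card_range, smul_eq_mul, mul_one, map_prod, hfactor,
    Polynomial.eval_homogenize_eq_sum, Finset.Nat.sum_antidiagonal_eq_sum_range_succ_mk] at this
  rw [degFall, ← this]
  rfl

theorem PowerSeries.factorial_mul_coeff_mul {R : Type*} [CommSemiring R] (f g : PowerSeries R)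
    (n : ℕ) :
    (n.factorial : R) * coeff n (f * g) =
      ∑ l ∈ range (n + 1), (n.choose l : R) * (l.factorial * coeff l f) *
        ((n - l).factorial * coeff (n - l) g) := by
  rw [coeff_mul, Finset.Nat.sum_antidiagonal_eq_sum_range_succ_mk, mul_sum]
  refine sum_congr rfl fun l hl => ?_
  rw [← Nat.choose_mul_factorial_mul_factorial (Nat.lt_succ_iff.mp (mem_range.mp hl))]
  push_cast
  ring

theorem factorial_mul_coeff_degExp (lam y : ℝ) (n : ℕ) :
    n.factorial * PowerSeries.coeff n (degExp lam y) = degFall y lam n := by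
  rw [degExp, PowerSeries.coeff_mk, mul_div_cancel₀ _ (by positivity)]

theorem degStirling2_eq_zero_of_lt (lam : ℝ) {n k : ℕ} (hnk : n < k) :
    degStirling2 lam n k = 0 := by
  have h0 : PowerSeries.constantCoeff (degExp lam 1 - 1) = 0 := by
    simp [degExp, degFall, ← PowerSeries.coeff_zero_eq_constantCoeff]
  have hord := PowerSeries.le_order_pow_of_constantCoeff_eq_zero k h0
  rw [degStirling2, map_smul,
    PowerSeries.coeff_of_lt_order _ ((Nat.cast_lt.mpr hnk).trans_le hord), smul_zero, mul_zero]

theorem extDegStirling2_eq_sum_general (lam : ℝ) (r n k : ℕ) :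
    extDegStirling2 lam r n k =
      ∑ l ∈ Finset.Icc k n, ∑ m ∈ Finset.range (n - l + 1),
        (n.choose l : ℝ) * (r : ℝ) ^ m * lam ^ (n - m - l) * stirling1 (n - l) m *
          degStirling2 lam l k := by
  have hconv : extDegStirling2 lam r n k =
      ∑ l ∈ range (n + 1), n.choose l * degStirling2 lam l k * degFall r lam (n - l) := by
    rw [extDegStirling2, mul_comm (degExp _ _), ← smul_mul_assoc,
      PowerSeries.factorial_mul_coeff_mul]
    simp only [factorial_mul_coeff_degExp]
    rfl
  have hinner (l : ℕ) : ∑ m ∈ range (n - l + 1), (n.choose l : ℝ) * (r : ℝ) ^ m *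
      lam ^ (n - m - l) * stirling1 (n - l) m * degStirling2 lam l k =
        n.choose l * degStirling2 lam l k * degFall r lam (n - l) := by
    rw [degFall_eq_sum_stirling1, mul_sum]
    refine sum_congr rfl fun m _ => ?_
    rw [Nat.sub_right_comm]
    ring
  rw [hconv, sum_congr rfl fun l _ => hinner l]
  refine (sum_subset (fun l hl => ?_) fun l hl hl' => ?_).symm
  · simp only [mem_Icc, mem_range] at hl ⊢
    omega
  · simp only [mem_Icc, mem_range, not_and_or, not_le] at hl hl'
    rw [degStirling2_eq_zero_of_lt lam (by omega), mul_zero, zero_mul]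

theorem extDegStirling2_eq_sum (lam : ℝ) (r n k : ℕ) (h : k ≤ n) :
    extDegStirling2 lam r n k =
      ∑ l ∈ Finset.Icc k n, ∑ m ∈ Finset.range (n - l + 1),
        (n.choose l : ℝ) * (r : ℝ) ^ m * lam ^ (n - m - l) * stirling1 (n - l) m *
          degStirling2 lam l k :=
  extDegStirling2_eq_sum_general lam r n k
end

section
/- (Theorem 2.2, first identity) For λ ∈ ℝ, r a nonnegative integer, every nonnegative integer n, and every real x, the degenerate falling factorial satisfies (x+r | λ)_n = Σ_{k=0}^{n} S_{2,r}(n+r, k+r | λ) (x)_k, where (x)_k = x(x−1)⋯(x−k+1) is the usual falling factorial. -/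
open Finset

/-!
For a natural number `m`, the exponent law `(1+λt)^{(x+y)/λ} = (1+λt)^{x/λ}(1+λt)^{y/λ}` (which is
the Vandermonde identity for `(x|λ)_n`) gives
`(1+λt)^{(m+r)/λ} = (1+λt)^{r/λ}(1 + ((1+λt)^{1/λ} - 1))^m`. Expanding binomially and using
`(m)_k = k! C(m,k)`, the coefficient of `tⁿ/n!` is the claimed identity at `x = m`. Both sides are
polynomials in `x` agreeing at every natural number, hence everywhere.
-/

namespace PowerSeries

variable {R : Type*} [CommSemiring R] {f : R⟦X⟧}

theorem coeff_mul_pow_eq_zero_of_lt (hf : constantCoeff f = 0) (g : R⟦X⟧) {n k : ℕ}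
    (h : n < k) : coeff n (g * f ^ k) = 0 :=
  X_pow_dvd_iff.mp (dvd_mul_of_dvd_right (pow_dvd_pow_of_dvd (X_dvd_iff.mpr hf) k) g) n h

theorem coeff_mul_one_add_pow (hf : constantCoeff f = 0) (g : R⟦X⟧) (m n : ℕ) :
    coeff n (g * (1 + f) ^ m) = ∑ k ∈ range (n + 1), (m.choose k : R) * coeff n (g * f ^ k) := by
  have hmin (N : ℕ) (hN : min m n ≤ N) : range (min m n + 1) ⊆ range (N + 1) :=
    range_subset_range.mpr (by omega)
  calc coeff n (g * (1 + f) ^ m)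
      = ∑ k ∈ range (m + 1), (m.choose k : R) * coeff n (g * f ^ k) := by
        rw [add_comm 1 f, add_pow, mul_sum, map_sum]
        refine sum_congr rfl fun k _ => ?_
        rw [one_pow, mul_one, ← map_natCast (C (R := R)), mul_comm (f ^ k), ← mul_assoc,
          mul_comm g, mul_assoc, coeff_C_mul]
    _ = ∑ k ∈ range (min m n + 1), (m.choose k : R) * coeff n (g * f ^ k) := by
        refine (sum_subset (hmin m (min_le_left m n)) fun k hk hk' => ?_).symm
        simp only [mem_range] at hk hk'
        rw [coeff_mul_pow_eq_zero_of_lt hf g (by omega), mul_zero]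
    _ = ∑ k ∈ range (n + 1), (m.choose k : R) * coeff n (g * f ^ k) := by
        refine sum_subset (hmin n (min_le_right m n)) fun k hk hk' => ?_
        simp only [mem_range] at hk hk'
        rw [Nat.choose_eq_zero_of_lt (by omega), Nat.cast_zero, zero_mul]

end PowerSeries

theorem Polynomial.eq_of_eval_natCast_eq {R : Type*} [CommRing R] [IsDomain R] [CharZero R]
    {p q : Polynomial R} (h : ∀ m : ℕ, p.eval (m : R) = q.eval (m : R)) : p = q :=
  eq_of_infinite_eval_eq p q <| (Set.infinite_range_of_injective Nat.cast_injective).mono <|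
    Set.range_subset_iff.mpr h

lemma degFall_succ (x lam : ℝ) (n : ℕ) :
    degFall x lam (n + 1) = degFall x lam n * (x - n * lam) :=
  prod_range_succ _ _

lemma degFall_zero_left (lam : ℝ) {n : ℕ} (hn : n ≠ 0) : degFall 0 lam n = 0 :=
  prod_eq_zero (mem_range.mpr (Nat.pos_of_ne_zero hn)) (by simp)

theorem degFall_add (x y lam : ℝ) (n : ℕ) :
    degFall (x + y) lam n = ∑ ij ∈ antidiagonal n,
      (n.choose ij.1 : ℝ) * (degFall x lam ij.1 * degFall y lam ij.2) := by
  induction n with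
  | zero => simp [degFall]
  | succ n ih =>
    rw [sum_antidiagonal_choose_succ_mul (fun i j => degFall x lam i * degFall y lam j),
      ← sum_add_distrib, degFall_succ, ih, sum_mul]
    refine sum_congr rfl fun ij hij => ?_
    obtain rfl : ij.1 + ij.2 = n := mem_antidiagonal.mp hij
    -- `x + y - nλ` splits as `(x - iλ) + (y - jλ)` when `i + j = n`
    rw [Nat.choose_symm_of_eq_add rfl, degFall_succ, degFall_succ]
    push_cast
    ring

theorem degFall_eq_factorial_mul_coeff_degExp (lam y : ℝ) (n : ℕ) :
    degFall y lam n = n.factorial * PowerSeries.coeff n (degExp lam y) := by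
  have := Nat.factorial_ne_zero n
  rw [degExp, PowerSeries.coeff_mk]
  field_simp

theorem degExp_add (lam x y : ℝ) : degExp lam (x + y) = degExp lam x * degExp lam y := by
  ext n
  simp only [PowerSeries.coeff_mul, degExp, PowerSeries.coeff_mk, degFall_add, sum_div]
  refine sum_congr rfl fun ij hij => ?_
  obtain rfl : ij.1 + ij.2 = n := mem_antidiagonal.mp hij
  have hfac : ((ij.1 + ij.2).factorial : ℝ) =
      (ij.1 + ij.2).choose ij.2 * ij.1.factorial * ij.2.factorial := by
    rw [← Nat.cast_mul, ← Nat.cast_mul, Nat.add_choose_mul_factorial_mul_factorial]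
  have := Nat.factorial_ne_zero ij.1
  have := Nat.factorial_ne_zero ij.2
  have := (Nat.choose_pos (Nat.le_add_left ij.2 ij.1)).ne'
  rw [hfac, Nat.choose_symm_add]
  field_simp

theorem degExp_zero (lam : ℝ) : degExp lam 0 = 1 := by
  ext n
  rcases eq_or_ne n 0 with rfl | hn
  · simp [degExp, degFall]
  · simp [degExp, degFall_zero_left lam hn, PowerSeries.coeff_one, hn]

theorem degExp_natCast (lam : ℝ) (m : ℕ) : degExp lam m = degExp lam 1 ^ m := by
  induction m with
  | zero => simpa using degExp_zero lam
  | succ m ih => rw [Nat.cast_succ, degExp_add, ih, pow_succ]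

theorem constantCoeff_degExp (lam y : ℝ) : PowerSeries.constantCoeff (degExp lam y) = 1 := by
  simp [degExp, degFall]

open Polynomial in
lemma degFall_eq_eval (x lam : ℝ) (n : ℕ) :
    degFall x lam n = (∏ i ∈ range n, (X - C ((i : ℝ) * lam))).eval x := by
  simp [degFall, eval_prod]

lemma fallFact_eq_eval (x : ℝ) (k : ℕ) : fallFact x k = (descPochhammer ℝ k).eval x :=
  (descPochhammer_eval_eq_prod_range k x).symm

lemma fallFact_natCast (m k : ℕ) : fallFact m k = k.factorial * m.choose k := by
  rw [fallFact_eq_eval, descPochhammer_eval_eq_descFactorial,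
    Nat.descFactorial_eq_factorial_mul_choose, Nat.cast_mul]

theorem degFall_natCast_add_eq_sum (lam : ℝ) (r n m : ℕ) :
    degFall (m + r) lam n =
      ∑ k ∈ range (n + 1), extDegStirling2 lam r n k * fallFact m k := by
  have hE : PowerSeries.constantCoeff (degExp lam 1 - 1) = 0 := by
    rw [map_sub, constantCoeff_degExp, map_one, sub_self]
  calc degFall (m + r) lam n
      = n.factorial * PowerSeries.coeff n (degExp lam r * (1 + (degExp lam 1 - 1)) ^ m) := by
        rw [degFall_eq_factorial_mul_coeff_degExp, add_comm, degExp_add, degExp_natCast lam m,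
          add_sub_cancel]
    _ = ∑ k ∈ range (n + 1), n.factorial *
          ((m.choose k : ℝ) * PowerSeries.coeff n (degExp lam r * (degExp lam 1 - 1) ^ k)) := by
        rw [PowerSeries.coeff_mul_one_add_pow hE, mul_sum]
    _ = ∑ k ∈ range (n + 1), extDegStirling2 lam r n k * fallFact m k := by
        refine sum_congr rfl fun k _ => ?_
        have := Nat.factorial_ne_zero k
        rw [extDegStirling2, fallFact_natCast, PowerSeries.coeff_smul, smul_eq_mul]
        field_simp

open Polynomial in
theorem degFall_poly_comp_eq_sum_extDegStirling2 (lam : ℝ) (r n : ℕ) :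
    (∏ i ∈ range n, (X - C ((i : ℝ) * lam))).comp (X + C (r : ℝ)) =
      ∑ k ∈ range (n + 1), C (extDegStirling2 lam r n k) * descPochhammer ℝ k := by
  refine eq_of_eval_natCast_eq fun m => ?_
  simpa only [eval_comp, eval_add, eval_X, eval_C, eval_finsetSum, eval_mul,
    ← degFall_eq_eval, ← fallFact_eq_eval] using degFall_natCast_add_eq_sum lam r n m

theorem degFall_add_eq_sum_extDegStirling2 (lam : ℝ) (r : ℕ) (n : ℕ) (x : ℝ) :
    degFall (x + r) lam n =
      ∑ k ∈ Finset.range (n + 1), extDegStirling2 lam r n k * fallFact x k := by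
  simpa only [Polynomial.eval_comp, Polynomial.eval_add, Polynomial.eval_X, Polynomial.eval_C,
    Polynomial.eval_finsetSum, Polynomial.eval_mul, ← degFall_eq_eval, ← fallFact_eq_eval] using
    congrArg (Polynomial.eval x) (degFall_poly_comp_eq_sum_extDegStirling2 lam r n)
end

section
/- (Theorem 2.3, first identity) For λ ∈ ℝ, r a nonnegative integer, every nonnegative integer n, and every real x, the extended degenerate Bell polynomial satisfies Bel^{(r)}_{n,λ}(x) = Σ_{k=0}^{n} x^k S_{2,r}(n+r, k+r | λ). -/
open Finset

/-! Since `(1+λt)^{1/λ} - 1` has no constant term, only its powers `k ≤ n` reach the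
coefficient of `t^n`, so the exponential may be replaced by the finite sum
`Σ_{k ≤ n} x^k ((1+λt)^{1/λ} - 1)^k / k!`, and multiplying by `(1+λt)^{r/λ}` gives the
extended degenerate Stirling numbers term by term. -/

open PowerSeries

lemma coeff_pow_eq_zero_of_lt {R : Type*} [Semiring R] {f : PowerSeries R}
    (hf : constantCoeff f = 0) {n k : ℕ} (hnk : n < k) : coeff n (f ^ k) = 0 :=
  coeff_of_lt_order n <|
    (Nat.cast_lt.mpr hnk).trans_le (le_order_pow_of_constantCoeff_eq_zero k hf)

section ExpComp

variable {f : PowerSeries ℝ}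

lemma coeff_expComp_eq_sum (hf : constantCoeff f = 0) {n N : ℕ} (hnN : n < N) :
    coeff n (expComp f) = ∑ k ∈ range N, coeff n (f ^ k) / k.factorial := by
  rw [expComp, coeff_mk]
  refine tsum_eq_sum fun k hk => ?_
  rw [coeff_pow_eq_zero_of_lt hf (hnN.trans_le (by simpa using hk)), zero_div]

lemma coeff_mul_expComp (hf : constantCoeff f = 0) (g : PowerSeries ℝ) (n : ℕ) :
    coeff n (g * expComp f) = ∑ k ∈ range (n + 1), coeff n (g * f ^ k) / k.factorial := by
  calc coeff n (g * expComp f)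
      = ∑ p ∈ antidiagonal n, ∑ k ∈ range (n + 1),
          coeff p.1 g * coeff p.2 (f ^ k) / k.factorial := by
        rw [coeff_mul]
        refine sum_congr rfl fun p hp => ?_
        have hp2 : p.2 < n + 1 := Nat.lt_succ_of_le (HasAntidiagonal.antidiagonal.snd_le hp)
        rw [coeff_expComp_eq_sum hf hp2, mul_sum]
        simp only [mul_div_assoc]
    _ = ∑ k ∈ range (n + 1), coeff n (g * f ^ k) / k.factorial := by
        rw [sum_comm]
        simp only [coeff_mul, sum_div]

end ExpComp

lemma constantCoeff_degExp_one_sub_one (lam : ℝ) : constantCoeff (degExp lam 1 - 1) = 0 := by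
  rw [← coeff_zero_eq_constantCoeff_apply]
  simp [degExp, degFall]

theorem extDegBell_eq_sum_extDegStirling2 (lam : ℝ) (r : ℕ) (n : ℕ) (x : ℝ) :
    extDegBell lam r x n =
      ∑ k ∈ Finset.range (n + 1), x ^ k * extDegStirling2 lam r n k := by
  have hf : constantCoeff (x • (degExp lam 1 - 1)) = 0 := by
    rw [← coeff_zero_eq_constantCoeff_apply, map_smul, coeff_zero_eq_constantCoeff_apply,
      constantCoeff_degExp_one_sub_one, smul_zero]
  rw [extDegBell, coeff_mul_expComp hf, mul_sum]
  refine sum_congr rfl fun k _ => ?_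
  rw [extDegStirling2, smul_pow, mul_smul_comm, map_smul, map_smul, smul_eq_mul, smul_eq_mul]
  ring
end
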